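/- arXiv:2103.13062 — 3 statements merged into one kernel-verified Lean document; each statement's English description precedes it below -/
import Mathlib

section
/- Let S be a Cu-semigroup and let T ⊆ S be a submonoid. Then the derived set T' := { sup_n x_n : (x_n) is a ≪-increasing sequence in T } is a submonoid of S that is closed under suprema of increasing sequences. -/
def WayBelow {S : Type*} [PartialOrder S] (x y : S) : Prop :=
  ∀ f : ℕ → S, Monotone f → ∀ z : S, IsLUB (Set.range f) z → y ≤ z → ∃ n, x ≤ f n

class CuSemigroup (S : Type*) [AddCommMonoid S] [PartialOrder S] : Prop where
  zero_le : ∀ x : S, 0 ≤ x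
  add_le_add_left : ∀ x y : S, x ≤ y → ∀ z : S, z + x ≤ z + y
  exists_sup : ∀ f : ℕ → S, Monotone f → ∃ z : S, IsLUB (Set.range f) z
  exists_wb_seq : ∀ x : S, ∃ f : ℕ → S, (∀ n, WayBelow (f n) (f (n + 1))) ∧ IsLUB (Set.range f) x
  wb_add : ∀ x' x y' y : S, WayBelow x' x → WayBelow y' y → WayBelow (x' + y') (x + y)
  sup_add : ∀ f g : ℕ → S, Monotone f → Monotone g → ∀ a b : S,
    IsLUB (Set.range f) a → IsLUB (Set.range g) b →
    IsLUB (Set.range fun n => f n + g n) (a + b)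

def cuDerivedSet {S : Type*} [PartialOrder S] (T : Set S) : Set S :=
  { s | ∃ f : ℕ → S, (∀ n, f n ∈ T) ∧ (∀ n, WayBelow (f n) (f (n + 1))) ∧ IsLUB (Set.range f) s }

def SupClosedSet {S : Type*} [PartialOrder S] (T : Set S) : Prop :=
  ∀ f : ℕ → S, Monotone f → (∀ n, f n ∈ T) → ∀ z : S, IsLUB (Set.range f) z → z ∈ T

section Aux

variable {S : Type*} [PartialOrder S]

lemma wayBelow_le {x y : S} (h : WayBelow x y) : x ≤ y := by
  obtain ⟨n, hn⟩ := h (fun _ => y) monotone_const y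
    ⟨fun a ⟨m, hm⟩ => hm ▸ le_rfl, fun a ha => ha ⟨0, rfl⟩⟩ le_rfl
  exact hn

lemma wayBelow_of_le {x y z : S} (h : WayBelow x y) (hyz : y ≤ z) : WayBelow x z :=
  fun f hf w hw hzw => h f hf w hw (hyz.trans hzw)

lemma le_wayBelow {x y z : S} (hxy : x ≤ y) (h : WayBelow y z) : WayBelow x z :=
  fun f hf w hw hzw => (h f hf w hw hzw).imp fun n hn => hxy.trans hn

lemma monotone_of_wb (f : ℕ → S) (h : ∀ n, WayBelow (f n) (f (n + 1))) : Monotone f :=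
  monotone_nat_of_le_succ fun n => wayBelow_le (h n)

end Aux

theorem derivedSet_submonoid_supClosed {S : Type*} [AddCommMonoid S] [PartialOrder S]
    [CuSemigroup S] (T : AddSubmonoid S) :
    (0 : S) ∈ cuDerivedSet (T : Set S) ∧
    (∀ x ∈ cuDerivedSet (T : Set S), ∀ y ∈ cuDerivedSet (T : Set S),
      x + y ∈ cuDerivedSet (T : Set S)) ∧
    SupClosedSet (cuDerivedSet (T : Set S)) := by
  refine ⟨?_, ?_, ?_⟩
  · -- zero
    refine ⟨fun _ => 0, fun _ => T.zero_mem, ?_, ?_⟩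
    · intro n f hf z hz hz0
      exact ⟨0, CuSemigroup.zero_le _⟩
    · constructor
      · rintro a ⟨m, rfl⟩; exact le_rfl
      · intro a ha; exact ha ⟨0, rfl⟩
  · -- addition
    rintro x ⟨f, hfT, hfwb, hfl⟩ y ⟨g, hgT, hgwb, hgl⟩
    refine ⟨fun n => f n + g n, fun n => T.add_mem (hfT n) (hgT n),
      fun n => CuSemigroup.wb_add _ _ _ _ (hfwb n) (hgwb n),
      CuSemigroup.sup_add f g (monotone_of_wb f hfwb) (monotone_of_wb g hgwb) x y hfl hgl⟩
  · -- sup-closed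
    intro zf hzf hzfT z hz
    choose F hFT hFwb hFl using hzfT
    have Fmono : ∀ k, Monotone (F k) := fun k => monotone_of_wb _ (hFwb k)
    have hFle : ∀ k m, F k m ≤ zf k := fun k m => (hFl k).1 ⟨m, rfl⟩
    -- for j ≤ k, every F j n is dominated by some F k m
    have hstep : ∀ j k n, ∃ m, j ≤ k → F j n ≤ F k m := by
      intro j k n
      by_cases hjk : j ≤ k
      · obtain ⟨m, hm⟩ := hFwb j n (F k) (Fmono k) (zf k) (hFl k)
          ((hFle j (n + 1)).trans (hzf hjk))
        exact ⟨m, fun _ => hm⟩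
      · exact ⟨0, fun h => absurd h hjk⟩
    choose M hM using hstep
    -- recursive index sequence
    let nn : ℕ → ℕ := fun k => Nat.rec (M 0 0 0)
      (fun k nk => max (M k (k + 1) (nk + 1))
        ((Finset.range (k + 2)).sup (fun j => M j (k + 1) (k + 1)))) k
    have hnsucc : ∀ k, nn (k + 1) = max (M k (k + 1) (nn k + 1))
        ((Finset.range (k + 2)).sup (fun j => M j (k + 1) (k + 1))) := fun k => rfl
    set g := fun k => F k (nn k) with hg
    have hlink : ∀ k, F k (nn k + 1) ≤ g (k + 1) := by
      intro k
      calc F k (nn k + 1) ≤ F (k + 1) (M k (k + 1) (nn k + 1)) := hM k (k + 1) (nn k + 1) (by omega)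
        _ ≤ F (k + 1) (nn (k + 1)) := Fmono (k + 1) (by rw [hnsucc]; exact le_max_left _ _)
    have hcof : ∀ j k, j ≤ k → F j k ≤ g k := by
      intro j k hjk
      cases k with
      | zero =>
        interval_cases j
        exact hM 0 0 0 le_rfl
      | succ k =>
        calc F j (k + 1) ≤ F (k + 1) (M j (k + 1) (k + 1)) := hM j (k + 1) (k + 1) hjk
          _ ≤ F (k + 1) (nn (k + 1)) := by
              apply Fmono (k + 1)
              rw [hnsucc]
              refine le_trans ?_ (le_max_right _ _)
              exact Finset.le_sup (f := fun j => M j (k + 1) (k + 1))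
                (Finset.mem_range.mpr (by omega))
    refine ⟨g, fun k => hFT k (nn k), ?_, ?_⟩
    · intro k
      exact wayBelow_of_le (hFwb k (nn k)) (hlink k)
    · constructor
      · rintro a ⟨k, rfl⟩
        exact (hFle k (nn k)).trans (hz.1 ⟨k, rfl⟩)
      · intro u hu
        apply hz.2
        rintro a ⟨j, rfl⟩
        apply (hFl j).2
        rintro b ⟨m, rfl⟩
        calc F j m ≤ F j (max j m) := Fmono j (le_max_right _ _)
          _ ≤ g (max j m) := hcof j (max j m) (le_max_left _ _)
          _ ≤ u := hu ⟨max j m, rfl⟩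
end

section
/- Let S be a Cu-semigroup approximated by a family (S_λ, φ_λ). Then dim(S) ≤ sup_λ dim(S_λ). -/
def IsCuMorphism {T S : Type*} [AddCommMonoid T] [PartialOrder T] [AddCommMonoid S]
    [PartialOrder S] (φ : T → S) : Prop :=
  φ 0 = 0 ∧ (∀ x y : T, φ (x + y) = φ x + φ y) ∧ Monotone φ ∧
  (∀ f : ℕ → T, Monotone f → ∀ z : T, IsLUB (Set.range f) z →
    IsLUB (Set.range fun n => φ (f n)) (φ z)) ∧
  (∀ x y : T, WayBelow x y → WayBelow (φ x) (φ y))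

def Approximates {S : Type*} [AddCommMonoid S] [PartialOrder S] {ι : Type*}
    (Sl : ι → Type*) [∀ i, AddCommMonoid (Sl i)] [∀ i, PartialOrder (Sl i)]
    (φ : ∀ i, Sl i → S) : Prop :=
  ∀ (p q : ℕ) (x' x : Fin p → S) (m n : Fin q → Fin p → ℕ),
    (∀ j, WayBelow (x' j) (x j)) →
    (∀ k, WayBelow (∑ j, m k j • x j) (∑ j, n k j • x' j)) →
    ∃ i, ∃ y : Fin p → Sl i,
      (∀ j, WayBelow (x' j) (φ i (y j)) ∧ WayBelow (φ i (y j)) (x j)) ∧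
      ∀ k, WayBelow (∑ j, m k j • y j) (∑ j, n k j • y j)

def DimLE (S : Type*) [AddCommMonoid S] [PartialOrder S] (n : ℕ) : Prop :=
  ∀ (x' x : S) (r : ℕ) (y : Fin r → S),
    WayBelow x' x → WayBelow x (∑ j, y j) →
    ∃ z : Fin r → Fin (n + 1) → S,
      (∀ j k, WayBelow (z j k) (y j)) ∧
      WayBelow x' (∑ j, ∑ k, z j k) ∧
      ∀ k, WayBelow (∑ j, z j k) x

noncomputable def CuDim (S : Type*) [AddCommMonoid S] [PartialOrder S] : ℕ∞ :=
  sInf {n : ℕ∞ | ∃ m : ℕ, n = (m : ℕ∞) ∧ DimLE S m}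

section Helpers

variable {S : Type*} [AddCommMonoid S] [PartialOrder S]

theorem wb_le {a b : S} (h : WayBelow a b) : a ≤ b := by
  obtain ⟨n, hn⟩ := h (fun _ => b) monotone_const b
    (by rw [Set.range_const]; exact isLUB_singleton) le_rfl
  exact hn

theorem le_wb {a b c : S} (hab : a ≤ b) (h : WayBelow b c) : WayBelow a c :=
  fun f hf z hz hcz => (h f hf z hz hcz).imp fun _ hn => hab.trans hn

theorem wb_le_trans {a b c : S} (h : WayBelow a b) (hbc : b ≤ c) : WayBelow a c :=
  fun f hf z hz hcz => h f hf z hz (hbc.trans hcz)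

variable [CuSemigroup S]

theorem wb_zero (x : S) : WayBelow (0 : S) x :=
  fun _ _ _ _ _ => ⟨0, CuSemigroup.zero_le _⟩

theorem cu_add_mono {a b c d : S} (h1 : a ≤ b) (h2 : c ≤ d) : a + c ≤ b + d :=
  calc a + c ≤ a + d := CuSemigroup.add_le_add_left _ _ h2 a
    _ = d + a := add_comm _ _
    _ ≤ d + b := CuSemigroup.add_le_add_left _ _ h1 d
    _ = b + d := add_comm _ _

theorem cu_sum_mono {α : Type*} (t : Finset α) (f g : α → S) (h : ∀ a ∈ t, f a ≤ g a) :
    ∑ a ∈ t, f a ≤ ∑ a ∈ t, g a := by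
  classical
  induction t using Finset.induction_on with
  | empty => simp
  | @insert a s ha ih =>
    rw [Finset.sum_insert ha, Finset.sum_insert ha]
    exact cu_add_mono (h a (Finset.mem_insert_self a s))
      (ih fun b hb => h b (Finset.mem_insert_of_mem hb))

theorem cu_sum_monotone {α : Type*} (t : Finset α) (f : α → ℕ → S)
    (h : ∀ a ∈ t, Monotone (f a)) : Monotone fun n => ∑ a ∈ t, f a n :=
  fun _ _ hnm => cu_sum_mono t _ _ fun a ha => h a ha hnm

theorem cu_sum_isLUB {α : Type*} (t : Finset α) (f : α → ℕ → S) (y : α → S)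
    (hm : ∀ a ∈ t, Monotone (f a)) (h : ∀ a ∈ t, IsLUB (Set.range (f a)) (y a)) :
    IsLUB (Set.range fun n => ∑ a ∈ t, f a n) (∑ a ∈ t, y a) := by
  classical
  induction t using Finset.induction_on with
  | empty =>
    have : IsLUB (Set.range fun _ : ℕ => (0 : S)) 0 := by
      rw [Set.range_const]; exact isLUB_singleton
    simpa using this
  | @insert a s ha ih =>
    have key := CuSemigroup.sup_add (f a) (fun n => ∑ b ∈ s, f b n)
      (hm a (Finset.mem_insert_self a s))
      (cu_sum_monotone s f fun b hb => hm b (Finset.mem_insert_of_mem hb))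
      (y a) (∑ b ∈ s, y b) (h a (Finset.mem_insert_self a s))
      (ih (fun b hb => hm b (Finset.mem_insert_of_mem hb))
          (fun b hb => h b (Finset.mem_insert_of_mem hb)))
    simpa [Finset.sum_insert ha] using key

theorem wb_interp {a b : S} (h : WayBelow a b) : ∃ c : S, WayBelow a c ∧ WayBelow c b := by
  obtain ⟨f, hf, hlub⟩ := CuSemigroup.exists_wb_seq b
  have hmono : Monotone f := monotone_nat_of_le_succ fun n => wb_le (hf n)
  obtain ⟨n, hn⟩ := h f hmono b hlub le_rfl
  exact ⟨f (n + 1), le_wb hn (hf n), wb_le_trans (hf (n + 1)) (hlub.1 ⟨n + 2, rfl⟩)⟩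

theorem cuMorphism_sum {T : Type*} [AddCommMonoid T] [PartialOrder T] {φ : T → S}
    (hφ : IsCuMorphism φ) {α : Type*} (t : Finset α) (g : α → T) :
    φ (∑ a ∈ t, g a) = ∑ a ∈ t, φ (g a) := by
  classical
  induction t using Finset.induction_on with
  | empty => simpa using hφ.1
  | @insert a s ha ih => rw [Finset.sum_insert ha, hφ.2.1, ih, Finset.sum_insert ha]

theorem pad_sum {M : Type*} [AddCommMonoid M] {m N : ℕ} (h : m ≤ N) (g : Fin (m + 1) → M) :
    (∑ k : Fin (N + 1), if hk : (k : ℕ) < m + 1 then g ⟨k, hk⟩ else 0) = ∑ k, g k := by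
  have e1 := Fin.sum_univ_eq_sum_range (fun i => if hk : i < m + 1 then g ⟨i, hk⟩ else 0) (N + 1)
  have e2 := Fin.sum_univ_eq_sum_range (fun i => if hk : i < m + 1 then g ⟨i, hk⟩ else 0) (m + 1)
  rw [e1, ← Finset.sum_subset (Finset.range_subset_range.mpr (by omega : m + 1 ≤ N + 1))
      (fun i _ hi => by
        rw [Finset.mem_range, not_lt] at hi
        exact dif_neg (by omega)), ← e2]
  exact Finset.sum_congr rfl fun k _ => by rw [dif_pos k.isLt]

end Helpers

theorem approximates_dim_le {S : Type*} [AddCommMonoid S] [PartialOrder S]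
    [CuSemigroup S] {ι : Type*} (Sl : ι → Type*) [∀ i, AddCommMonoid (Sl i)]
    [∀ i, PartialOrder (Sl i)] [∀ i, CuSemigroup (Sl i)]
    (φ : ∀ i, Sl i → S) (hφ : ∀ i, IsCuMorphism (φ i))
    (happrox : Approximates Sl φ) :
    CuDim S ≤ ⨆ i, CuDim (Sl i) := by
  rcases eq_or_ne (⨆ i, CuDim (Sl i)) ⊤ with htop | htop
  · rw [htop]; exact le_top
  obtain ⟨N, hN0⟩ := WithTop.ne_top_iff_exists.mp htop
  have hN : (N : ℕ∞) = ⨆ i, CuDim (Sl i) := by exact_mod_cast hN0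
  -- every Sl i has dimension at most N
  have hdim : ∀ i, ∃ m : ℕ, m ≤ N ∧ DimLE (Sl i) m := by
    intro i
    by_contra hc
    push_neg at hc
    have h1 : ((N + 1 : ℕ) : ℕ∞) ≤ CuDim (Sl i) := by
      apply le_sInf
      rintro a ⟨m, rfl, hD⟩
      have hm : N < m := lt_of_not_ge fun hle => hc m hle hD
      exact_mod_cast hm
    have h2 : CuDim (Sl i) ≤ (N : ℕ∞) := by rw [hN]; exact le_iSup (fun i => CuDim (Sl i)) i
    have h3 : ((N + 1 : ℕ) : ℕ∞) ≤ (N : ℕ∞) := h1.trans h2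
    have : N + 1 ≤ N := by exact_mod_cast h3
    omega
  -- the key step: S has dimension at most N
  have hS : DimLE S N := by
    intro x' x r y hx'x hxy
    -- interpolate x' ≪ x₁ ≪ x₂ ≪ x
    obtain ⟨x₁, hx'x₁, hx₁x⟩ := wb_interp hx'x
    obtain ⟨x₂, hx₁x₂, hx₂x⟩ := wb_interp hx₁x
    -- rapidly increasing sequences below each y j
    have hseq : ∀ j : Fin r, ∃ g : ℕ → S,
        (∀ n, WayBelow (g n) (g (n + 1))) ∧ IsLUB (Set.range g) (y j) :=
      fun j => CuSemigroup.exists_wb_seq (y j)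
    choose g hg hglub using hseq
    have hgmono : ∀ j, Monotone (g j) :=
      fun j => monotone_nat_of_le_succ fun n => wb_le (hg j n)
    have hsumlub : IsLUB (Set.range fun n => ∑ j, g j n) (∑ j, y j) :=
      cu_sum_isLUB Finset.univ g y (fun j _ => hgmono j) (fun j _ => hglub j)
    obtain ⟨n₀, hn₀⟩ := hxy (fun n => ∑ j, g j n)
      (cu_sum_monotone Finset.univ g fun j _ => hgmono j) (∑ j, y j) hsumlub le_rfl
    set y'' : Fin r → S := fun j => g j n₀ with hy''
    set y' : Fin r → S := fun j => g j (n₀ + 1) with hy'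
    have hy''y' : ∀ j, WayBelow (y'' j) (y' j) := fun j => hg j n₀
    have hy'y : ∀ j, WayBelow (y' j) (y j) :=
      fun j => wb_le_trans (hg j (n₀ + 1)) ((hglub j).1 ⟨n₀ + 2, rfl⟩)
    have hxsum : x ≤ ∑ j, y'' j := hn₀
    -- apply approximation
    obtain ⟨i, w, hw1, hw2⟩ := happrox (r + 1) 1
      (Fin.cons x₁ y'') (Fin.cons x₂ y')
      (fun _ => Fin.cons 1 0) (fun _ => Fin.cons 0 1)
      (by
        intro j
        refine Fin.cases ?_ ?_ j
        · simpa using hx₁x₂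
        · intro j; simpa using hy''y' j)
      (by
        intro k
        have : WayBelow x₂ (∑ j, y'' j) := wb_le_trans hx₂x hxsum
        simpa [Fin.sum_univ_succ] using this)
    have hrel : WayBelow (w 0) (∑ j : Fin r, w j.succ) := by
      have := hw2 0
      simpa [Fin.sum_univ_succ] using this
    have hw0 : WayBelow x₁ (φ i (w 0)) ∧ WayBelow (φ i (w 0)) x₂ := by
      simpa using hw1 0
    have hwj : ∀ j : Fin r, WayBelow (y'' j) (φ i (w j.succ)) ∧ WayBelow (φ i (w j.succ)) (y' j) := by
      intro j; simpa using hw1 j.succ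
    -- find u ≪ w 0 with x₁ ≤ φ i u
    obtain ⟨u, hu, hulub⟩ := CuSemigroup.exists_wb_seq (w 0)
    have humono : Monotone u := monotone_nat_of_le_succ fun n => wb_le (hu n)
    have hφlub : IsLUB (Set.range fun n => φ i (u n)) (φ i (w 0)) :=
      (hφ i).2.2.2.1 u humono (w 0) hulub
    obtain ⟨n₁, hn₁⟩ := hw0.1 (fun n => φ i (u n)) ((hφ i).2.2.1.comp humono)
      (φ i (w 0)) hφlub le_rfl
    have hu' : WayBelow (u n₁) (w 0) := wb_le_trans (hu n₁) (hulub.1 ⟨n₁ + 1, rfl⟩)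
    -- apply finite-dimensionality of Sl i
    obtain ⟨m, hmN, hDm⟩ := hdim i
    obtain ⟨ζ, hζ1, hζ2, hζ3⟩ := hDm (u n₁) (w 0) r (fun j => w j.succ) hu' hrel
    -- push forward and pad with zeros
    refine ⟨fun j k => if hk : (k : ℕ) < m + 1 then φ i (ζ j ⟨k, hk⟩) else 0, ?_, ?_, ?_⟩
    · intro j k
      by_cases hk : (k : ℕ) < m + 1
      · simp only [dif_pos hk]
        have h1 : φ i (ζ j ⟨k, hk⟩) ≤ φ i (w j.succ) :=
          wb_le ((hφ i).2.2.2.2 _ _ (hζ1 j ⟨k, hk⟩))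
        have h2 : φ i (w j.succ) ≤ y' j := wb_le (hwj j).2
        exact le_wb (h1.trans h2) (hy'y j)
      · simp only [dif_neg hk]; exact wb_zero (y j)
    · have hsum : ∀ j : Fin r,
          (∑ k : Fin (N + 1), if hk : (k : ℕ) < m + 1 then φ i (ζ j ⟨k, hk⟩) else 0)
            = ∑ k : Fin (m + 1), φ i (ζ j k) :=
        fun j => pad_sum hmN (fun k => φ i (ζ j k))
      have heq : (∑ j, ∑ k : Fin (N + 1), if hk : (k : ℕ) < m + 1 then φ i (ζ j ⟨k, hk⟩) else 0)
          = φ i (∑ j, ∑ k, ζ j k) := by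
        rw [Finset.sum_congr rfl fun j _ => hsum j, cuMorphism_sum (hφ i)]
        exact Finset.sum_congr rfl fun j _ => (cuMorphism_sum (hφ i) _ _).symm
      simp only [heq]
      have h1 : x₁ ≤ φ i (u n₁) := hn₁
      have h2 : φ i (u n₁) ≤ φ i (∑ j, ∑ k, ζ j k) := (hφ i).2.2.1 (wb_le hζ2)
      exact wb_le_trans hx'x₁ (h1.trans h2)
    · intro k
      by_cases hk : (k : ℕ) < m + 1
      · have heq : (∑ j, if h : (k : ℕ) < m + 1 then φ i (ζ j ⟨k, h⟩) else 0)
            = φ i (∑ j, ζ j ⟨k, hk⟩) := by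
          rw [Finset.sum_congr rfl fun j _ => dif_pos hk, cuMorphism_sum (hφ i)]
        simp only [heq]
        have h1 : φ i (∑ j, ζ j ⟨k, hk⟩) ≤ φ i (w 0) := (hφ i).2.2.1 (wb_le (hζ3 ⟨k, hk⟩))
        have h2 : φ i (w 0) ≤ x₂ := wb_le hw0.2
        exact le_wb (h1.trans h2) hx₂x
      · have heq : (∑ j : Fin r, if h : (k : ℕ) < m + 1 then φ i (ζ j ⟨k, h⟩) else 0)
            = 0 := by
          rw [Finset.sum_congr rfl fun j _ => dif_neg hk, Finset.sum_const_zero]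
        simp only [heq]
        exact wb_zero x
  calc CuDim S ≤ (N : ℕ∞) := sInf_le ⟨N, rfl, hS⟩
    _ = ⨆ i, CuDim (Sl i) := hN
end

section
/- Let S be a Cu-semigroup and n ∈ ℕ. Then dim(S) ≤ n if and only if every finite subset of S is contained in a sub-Cu-semigroup T ⊆ S with dim(T) ≤ n, which in turn holds if and only if every countable subset of S is contained in a countably based sub-Cu-semigroup T ⊆ S with dim(T) ≤ n. -/
def IsSubCu {S : Type*} [AddCommMonoid S] [PartialOrder S] (T : AddSubmonoid S) : Prop :=
  CuSemigroup T ∧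
  (∀ f : ℕ → T, Monotone f → ∀ z : T, IsLUB (Set.range f) z →
    IsLUB (Set.range fun n => (f n : S)) (z : S)) ∧
  (∀ x y : T, WayBelow x y → WayBelow (x : S) (y : S))

def CountablyBased (S : Type*) [PartialOrder S] : Prop :=
  ∃ B : Set S, B.Countable ∧ ∀ x' x : S, WayBelow x' x → ∃ b ∈ B, WayBelow x' b ∧ WayBelow b x

/-!
Closing a countable set under sums, under chosen `≪`-increasing approximating sequences and
under chosen witnesses of `dim ≤ n` gives a countable submonoid `B`. The suprema of
`≪`-increasing sequences in `B` form a sub-Cu-semigroup with basis `B` (a diagonal argument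
shows this set is closed under suprema), and any instance of the dimension condition in it can be
pushed down to data in `B`, where a witness is available. Conversely, each instance of the
dimension condition in `S` involves finitely many elements, and a sub-Cu-semigroup containing
them computes `≪` and sums as `S` does.
-/

section WayBelow

variable {S : Type*} [PartialOrder S] {x y z : S}

theorem isLUB_range_const (y : S) : IsLUB (Set.range fun _ : ℕ => y) y := by
  rw [Set.range_const]
  exact isLUB_singleton

theorem WayBelow.le (h : WayBelow x y) : x ≤ y :=
  h (fun _ => y) monotone_const y (isLUB_range_const y) le_rfl |>.elim fun _ => id

theorem WayBelow.trans_le (h : WayBelow x y) (hyz : y ≤ z) : WayBelow x z :=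
  fun f hf w hw hzw => h f hf w hw (hyz.trans hzw)

theorem LE.le.trans_wayBelow (hxy : x ≤ y) (h : WayBelow y z) : WayBelow x z :=
  fun f hf w hw hzw => (h f hf w hw hzw).imp fun _ => hxy.trans

theorem monotone_of_wayBelow_succ {f : ℕ → S} (hf : ∀ k, WayBelow (f k) (f (k + 1))) :
    Monotone f :=
  monotone_nat_of_le_succ fun k => (hf k).le

end WayBelow

theorem exists_seq_of_forall_exists_step {α : Type*} {P : α → Prop} (R : ℕ → α → α → Prop)
    {a : α} (ha : P a) (h : ∀ l x, P x → ∃ y, P y ∧ R l x y) :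
    ∃ c : ℕ → α, (∀ l, P (c l)) ∧ ∀ l, R l (c l) (c (l + 1)) := by
  choose! g hgP hgR using h
  let c : ℕ → α := fun l => Nat.rec a g l
  have hc : ∀ l, P (c l) := fun l => Nat.rec ha (fun l ih => hgP l _ ih) l
  exact ⟨c, hc, fun l => hgR l _ (hc l)⟩

section CuDerivedSet

variable {S : Type*} [PartialOrder S]

theorem cuDerivedSet_mono {A A' : Set S} (h : A ⊆ A') : cuDerivedSet A ⊆ cuDerivedSet A' :=
  fun _ ⟨f, hfA, hf⟩ => ⟨f, fun k => h (hfA k), hf⟩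

theorem exists_mem_wayBelow_of_mem_cuDerivedSet {B : Set S} {v x y : S}
    (hv : v ∈ cuDerivedSet B) (hx : WayBelow x v) (hy : WayBelow y v) :
    ∃ d ∈ B, WayBelow x d ∧ WayBelow y d ∧ WayBelow d v := by
  obtain ⟨f, hfB, hfwb, hflub⟩ := hv
  have hf := monotone_of_wayBelow_succ hfwb
  obtain ⟨K₁, hK₁⟩ := hx f hf v hflub le_rfl
  obtain ⟨K₂, hK₂⟩ := hy f hf v hflub le_rfl
  set K := max K₁ K₂
  exact ⟨f (K + 1), hfB _, (hK₁.trans (hf (le_max_left _ _))).trans_wayBelow (hfwb K),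
    (hK₂.trans (hf (le_max_right _ _))).trans_wayBelow (hfwb K),
    (hfwb (K + 1)).trans_le (hflub.1 ⟨K + 2, rfl⟩)⟩

/-- Diagonal argument: the approximants `b p q` of all the `t p` are enumerated through
`Nat.unpair`, and absorbed one at a time into a single `≪`-increasing sequence in `B`. -/
theorem supClosedSet_cuDerivedSet (B : Set S) : SupClosedSet (cuDerivedSet B) := by
  intro t ht htB z hz
  choose b hbB hbwb hblub using htB
  have hb_wb_t : ∀ p q, WayBelow (b p q) (t p) := fun p q =>
    (hbwb p q).trans_le ((hblub p).1 ⟨q + 1, rfl⟩)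
  have step : ∀ (l : ℕ) (x : S), (x ∈ B ∧ ∃ m, WayBelow x (t m)) →
      ∃ y, (y ∈ B ∧ ∃ m, WayBelow y (t m)) ∧
        (WayBelow x y ∧ b (Nat.unpair l).1 (Nat.unpair l).2 ≤ y) := by
    rintro l x ⟨-, m, hxm⟩
    set M := max m (Nat.unpair l).1
    obtain ⟨d, hdB, hxd, hbd, hdt⟩ := exists_mem_wayBelow_of_mem_cuDerivedSet
      ⟨b M, hbB M, hbwb M, hblub M⟩
      (hxm.trans_le (ht (le_max_left _ _))) ((hb_wb_t _ _).trans_le (ht (le_max_right _ _)))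
    exact ⟨d, ⟨hdB, M, hdt⟩, hxd, hbd.le⟩
  obtain ⟨c, hc, hcR⟩ := exists_seq_of_forall_exists_step _ ⟨hbB 0 0, 0, hb_wb_t 0 0⟩ step
  refine ⟨c, fun l => (hc l).1, fun l => (hcR l).1, ?_, fun u hu => hz.2 ?_⟩
  · rintro _ ⟨l, rfl⟩
    obtain ⟨m, hm⟩ := (hc l).2
    exact hm.le.trans (hz.1 ⟨m, rfl⟩)
  · rintro _ ⟨p, rfl⟩
    refine (hblub p).2 ?_
    rintro _ ⟨q, rfl⟩
    have hpq := (hcR (Nat.pair p q)).2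
    rw [Nat.unpair_pair] at hpq
    exact hpq.trans (hu ⟨_, rfl⟩)

end CuDerivedSet

instance CuSemigroup.toIsOrderedAddMonoid {S : Type*} [AddCommMonoid S] [PartialOrder S]
    [CuSemigroup S] : IsOrderedAddMonoid S where
  add_le_add_left a b h c := by
    simpa only [add_comm _ c] using CuSemigroup.add_le_add_left a b h c

theorem CuSemigroup.isLUB_sum {S ι : Type*} [AddCommMonoid S] [PartialOrder S] [CuSemigroup S]
    (s : Finset ι) {f : ι → ℕ → S} {a : ι → S} (hf : ∀ i, Monotone (f i))
    (ha : ∀ i, IsLUB (Set.range (f i)) (a i)) :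
    IsLUB (Set.range fun k => ∑ i ∈ s, f i k) (∑ i ∈ s, a i) := by
  classical
  induction s using Finset.induction_on with
  | empty => simp
  | insert i s hi ih =>
    simpa only [Finset.sum_insert hi] using CuSemigroup.sup_add _ _ (hf i)
      (fun p q hpq => Finset.sum_le_sum fun i _ => hf i hpq) _ _ (ha i) ih

namespace AddSubmonoid

variable {S : Type*} [AddCommMonoid S] [PartialOrder S] {T : AddSubmonoid S}

theorem isLUB_of_isLUB_coe {f : ℕ → T} {z : T}
    (h : IsLUB (Set.range fun k => (f k : S)) z) : IsLUB (Set.range f) z :=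
  ⟨by rintro _ ⟨k, rfl⟩; exact h.1 ⟨k, rfl⟩,
    fun u hu => h.2 (by rintro _ ⟨k, rfl⟩; exact hu ⟨k, rfl⟩)⟩

theorem wayBelow_of_wayBelow_coe
    (hT : ∀ f : ℕ → T, Monotone f → ∀ z : T, IsLUB (Set.range f) z →
      IsLUB (Set.range fun k => (f k : S)) (z : S))
    {x y : T} (h : WayBelow (x : S) y) : WayBelow x y :=
  fun f hf z hz hyz => h _ (fun _ _ hpq => hf hpq) z (hT f hf z hz) hyz

theorem wayBelow_coe_of_subset_cuDerivedSet (hT : (T : Set S) ⊆ cuDerivedSet T) {x y : T}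
    (h : WayBelow x y) : WayBelow (x : S) y := by
  obtain ⟨f, hfT, hfwb, hflub⟩ := hT y.2
  obtain ⟨k, hk⟩ := h (fun k => ⟨f k, hfT k⟩)
    (fun _ _ hpq => monotone_of_wayBelow_succ hfwb hpq) y (isLUB_of_isLUB_coe hflub) le_rfl
  exact (show (x : S) ≤ f k from hk).trans_wayBelow ((hfwb k).trans_le (hflub.1 ⟨k + 1, rfl⟩))

variable [CuSemigroup S]

theorem exists_isLUB_coe_of_supClosedSet (hT : SupClosedSet (T : Set S)) {f : ℕ → T}
    (hf : Monotone f) : ∃ z : T, IsLUB (Set.range fun k => (f k : S)) z := by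
  have hf' : Monotone fun k => (f k : S) := fun _ _ hpq => hf hpq
  obtain ⟨z, hz⟩ := CuSemigroup.exists_sup _ hf'
  exact ⟨⟨z, hT _ hf' (fun k => (f k).2) z hz⟩, hz⟩

theorem isLUB_coe_of_supClosedSet (hT : SupClosedSet (T : Set S)) {f : ℕ → T}
    (hf : Monotone f) {z : T} (hz : IsLUB (Set.range f) z) :
    IsLUB (Set.range fun k => (f k : S)) z := by
  obtain ⟨w, hw⟩ := exists_isLUB_coe_of_supClosedSet hT hf
  rwa [hz.unique (isLUB_of_isLUB_coe hw)]

theorem isSubCu_of_supClosedSet (hsup : SupClosedSet (T : Set S))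
    (happrox : (T : Set S) ⊆ cuDerivedSet T) : IsSubCu T := by
  have hlub : ∀ f : ℕ → T, Monotone f → ∀ z : T, IsLUB (Set.range f) z →
      IsLUB (Set.range fun k => (f k : S)) z := fun _ hf _ hz =>
    isLUB_coe_of_supClosedSet hsup hf hz
  have hwb_coe : ∀ x y : T, WayBelow x y → WayBelow (x : S) y := fun _ _ =>
    wayBelow_coe_of_subset_cuDerivedSet happrox
  refine ⟨⟨fun x => CuSemigroup.zero_le (x : S),
    fun x y h z => CuSemigroup.add_le_add_left (x : S) y h z, fun f hf => ?_, fun x => ?_,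
    fun x' x y' y h h' => ?_, fun f g hf hg a b ha hb => ?_⟩, hlub, hwb_coe⟩
  · obtain ⟨z, hz⟩ := exists_isLUB_coe_of_supClosedSet hsup hf
    exact ⟨z, isLUB_of_isLUB_coe hz⟩
  · obtain ⟨f, hfT, hfwb, hflub⟩ := happrox x.2
    exact ⟨fun k => ⟨f k, hfT k⟩, fun k => wayBelow_of_wayBelow_coe hlub (hfwb k),
      isLUB_of_isLUB_coe hflub⟩
  · exact wayBelow_of_wayBelow_coe hlub
      (CuSemigroup.wb_add _ _ _ _ (hwb_coe _ _ h) (hwb_coe _ _ h'))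
  · exact isLUB_of_isLUB_coe (CuSemigroup.sup_add (fun k => (f k : S)) (fun k => (g k : S))
      (fun _ _ hpq => hf hpq) (fun _ _ hpq => hg hpq) _ _ (hlub f hf a ha) (hlub g hg b hb))

end AddSubmonoid

section Dimension

variable {S : Type*} [AddCommMonoid S] [PartialOrder S] {n r : ℕ}

def IsDimWitness (x' x : S) (y : Fin r → S) (z : Fin r → Fin (n + 1) → S) : Prop :=
  (∀ j k, WayBelow (z j k) (y j)) ∧ WayBelow x' (∑ j, ∑ k, z j k) ∧
    ∀ k, WayBelow (∑ j, z j k) x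

def DimLEOn (B : Set S) (n : ℕ) : Prop :=
  ∀ x' ∈ B, ∀ x ∈ B, ∀ (r : ℕ) (y : Fin r → S), (∀ j, y j ∈ B) →
    WayBelow x' x → WayBelow x (∑ j, y j) →
    ∃ z : Fin r → Fin (n + 1) → S, (∀ j k, z j k ∈ B) ∧ IsDimWitness x' x y z

theorem IsDimWitness.mono {x'₀ x₀ x' x : S} {y₀ y : Fin r → S} {z : Fin r → Fin (n + 1) → S}
    (h : IsDimWitness x'₀ x₀ y₀ z) (hx' : x' ≤ x'₀) (hx : x₀ ≤ x) (hy : ∀ j, y₀ j ≤ y j) :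
    IsDimWitness x' x y z :=
  ⟨fun j k => (h.1 j k).trans_le (hy j), hx'.trans_wayBelow h.2.1,
    fun k => (h.2.2 k).trans_le hx⟩

end Dimension

namespace IsSubCu

variable {S : Type*} [AddCommMonoid S] [PartialOrder S] {T : AddSubmonoid S} {B : Set S}
  {n r : ℕ}

theorem wayBelow_coe_iff (hT : IsSubCu T) {x y : T} : WayBelow (x : S) y ↔ WayBelow x y :=
  ⟨T.wayBelow_of_wayBelow_coe hT.2.1, hT.2.2 x y⟩

theorem isDimWitness_coe_iff (hT : IsSubCu T) {x' x : T} {y : Fin r → T}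
    {z : Fin r → Fin (n + 1) → T} :
    IsDimWitness (x' : S) x (fun j => y j) (fun j k => z j k) ↔ IsDimWitness x' x y z := by
  simp only [IsDimWitness, ← AddSubmonoid.coe_finsetSum, hT.wayBelow_coe_iff]

theorem countablyBased (hT : IsSubCu T) (hBc : B.Countable) (hBT : B ⊆ T)
    (hTB : (T : Set S) ⊆ cuDerivedSet B) : CountablyBased T := by
  refine ⟨(↑) ⁻¹' B, hBc.preimage Subtype.coe_injective, fun x' x h => ?_⟩
  obtain ⟨b, hbB, hx'b, -, hbx⟩ :=
    exists_mem_wayBelow_of_mem_cuDerivedSet (hTB x.2) (hT.2.2 _ _ h) (hT.2.2 _ _ h)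
  exact ⟨⟨b, hBT hbB⟩, hbB, hT.wayBelow_coe_iff.1 hx'b, hT.wayBelow_coe_iff.1 hbx⟩

theorem dimLE [CuSemigroup S] (hT : IsSubCu T) (hBT : B ⊆ T) (hTB : (T : Set S) ⊆ cuDerivedSet B)
    (hB : DimLEOn B n) : DimLE T n := by
  intro x' x r y hx'x hxy
  rw [← hT.wayBelow_coe_iff] at hx'x hxy
  rw [AddSubmonoid.coe_finsetSum] at hxy
  obtain ⟨b, hbB, -, hx'b, hbx⟩ :=
    exists_mem_wayBelow_of_mem_cuDerivedSet (hTB x.2) hx'x hx'x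
  obtain ⟨b', hb'B, -, hx'b', hb'b⟩ :=
    exists_mem_wayBelow_of_mem_cuDerivedSet (hTB (hBT hbB)) hx'b hx'b
  choose c hcB hcwb hclub using fun j => hTB (y j).2
  have hc := fun j => monotone_of_wayBelow_succ (hcwb j)
  obtain ⟨K, hK⟩ := hxy _ (fun p q hpq => Finset.sum_le_sum fun j _ => hc j hpq) _
    (CuSemigroup.isLUB_sum _ hc hclub) le_rfl
  obtain ⟨z, hzB, hz⟩ := hB b' hb'B b hbB r (fun j => c j K) (fun j => hcB j K) hb'b
    (hbx.trans_le hK)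
  refine ⟨fun j k => ⟨z j k, hBT (hzB j k)⟩, hT.isDimWitness_coe_iff.1 ?_⟩
  exact hz.mono hx'b'.le hbx.le fun j => (hclub j).1 ⟨K, rfl⟩

end IsSubCu

theorem Set.Countable.exists_superset_finitely_closed {α : Type*} {C : Set α} (hC : C.Countable)
    {g : Set α → Set α} (hg : Monotone g) (hgc : ∀ A, A.Countable → (g A).Countable) :
    ∃ B : Set α, B.Countable ∧ C ⊆ B ∧ ∀ F : Finset α, ↑F ⊆ B → g F ⊆ B := by
  set A : ℕ → Set α := fun m => (fun A => A ∪ g A)^[m] C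
  have hA_succ : ∀ m, A (m + 1) = A m ∪ g (A m) := fun m => Function.iterate_succ_apply' _ _ _
  have hA : Monotone A :=
    monotone_nat_of_le_succ fun m => (hA_succ m).symm ▸ Set.subset_union_left
  refine ⟨⋃ m, A m, Set.countable_iUnion fun m => ?_, Set.subset_iUnion A 0, fun F hF => ?_⟩
  · induction m with
    | zero => exact hC
    | succ m ih => exact (hA_succ m).symm ▸ ih.union (hgc _ ih)
  obtain ⟨m, hFm⟩ := hA.directed_le.exists_mem_subset_of_finset_subset_biUnion hF
  calc g F ⊆ g (A m) := hg hFm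
    _ ⊆ A (m + 1) := by rw [hA_succ]; exact Set.subset_union_right
    _ ⊆ ⋃ m, A m := Set.subset_iUnion A (m + 1)

namespace AddSubmonoid

variable {S : Type*} [AddCommMonoid S] [PartialOrder S] [CuSemigroup S]

def cuDerived (B : AddSubmonoid S) : AddSubmonoid S where
  carrier := cuDerivedSet B
  zero_mem' := ⟨fun _ => 0, fun _ => B.zero_mem,
    fun _ _ _ _ _ _ => ⟨0, CuSemigroup.zero_le _⟩, isLUB_range_const 0⟩
  add_mem' := by
    rintro a b ⟨f, hfB, hfwb, hflub⟩ ⟨g, hgB, hgwb, hglub⟩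
    exact ⟨f + g, fun k => B.add_mem (hfB k) (hgB k),
      fun k => CuSemigroup.wb_add _ _ _ _ (hfwb k) (hgwb k),
      CuSemigroup.sup_add f g (monotone_of_wayBelow_succ hfwb) (monotone_of_wayBelow_succ hgwb)
        a b hflub hglub⟩

theorem isSubCu_cuDerived {B : AddSubmonoid S} (hB : (B : Set S) ⊆ cuDerivedSet B) :
    IsSubCu B.cuDerived :=
  isSubCu_of_supClosedSet (supClosedSet_cuDerivedSet (B : Set S)) (cuDerivedSet_mono hB)

end AddSubmonoid

theorem exists_countable_addSubmonoid_dimLEOn {S : Type*} [AddCommMonoid S] [PartialOrder S]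
    [CuSemigroup S] {n : ℕ} (h : DimLE S n) {C : Set S} (hC : C.Countable) :
    ∃ B : AddSubmonoid S, (B : Set S).Countable ∧ C ⊆ B ∧ (B : Set S) ⊆ cuDerivedSet B ∧
      DimLEOn (B : Set S) n := by
  classical
  choose σ hσwb hσlub using CuSemigroup.exists_wb_seq (S := S)
  -- `Classical.epsilon` is a witness whenever one exists, and junk (never used) otherwise.
  let W : ∀ {r : ℕ}, S → S → (Fin r → S) → Fin r → Fin (n + 1) → S :=
    fun x' x y => Classical.epsilon (IsDimWitness x' x y)
  let g : Set S → Set S := fun A => insert 0 (Set.image2 (· + ·) A A) ∪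
    (⋃ x ∈ A, Set.range (σ x)) ∪
    ⋃ x' ∈ A, ⋃ x ∈ A, ⋃ r, ⋃ y ∈ {y : Fin r → S | ∀ j, y j ∈ A},
      Set.range (Function.uncurry (W x' x y))
  have hg : Monotone g := fun A A' h =>
    Set.union_subset_union
      (Set.union_subset_union (Set.insert_subset_insert (Set.image2_subset h h))
        (Set.biUnion_mono h fun _ _ => subset_rfl))
      (Set.biUnion_mono h fun _ _ => Set.biUnion_mono h fun _ _ => Set.iUnion_mono fun _ =>
        Set.biUnion_mono (fun y hy j => h (hy j)) fun _ _ => subset_rfl)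
  have hgc : ∀ A, A.Countable → (g A).Countable := fun A hA =>
    (((hA.image2 hA _).insert 0).union (hA.biUnion fun _ _ => Set.countable_range _)).union
      (hA.biUnion fun _ _ => hA.biUnion fun _ _ => Set.countable_iUnion fun _ =>
        (Set.countable_pi fun _ => hA).biUnion fun _ _ => Set.countable_range _)
  obtain ⟨B, hBc, hCB, hB⟩ := hC.exists_superset_finitely_closed hg hgc
  have hB0 : 0 ∈ B := hB ∅ (by simp) (Or.inl (Or.inl (Set.mem_insert 0 _)))
  have hBadd : ∀ x ∈ B, ∀ y ∈ B, x + y ∈ B := fun x hx y hy =>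
    hB {x, y} (by simp [Set.insert_subset_iff, hx, hy])
      (Or.inl (Or.inl (Set.mem_insert_of_mem _ (Set.mem_image2_of_mem (by simp) (by simp)))))
  refine ⟨⟨⟨B, fun ha hb => hBadd _ ha _ hb⟩, hB0⟩, hBc, hCB,
    fun x hx => ⟨σ x, fun k => ?_, hσwb x, hσlub x⟩, ?_⟩
  · exact hB {x} (by simpa using hx) (Or.inl (Or.inr (Set.mem_biUnion (by simp) ⟨k, rfl⟩)))
  · intro x' hx' x hx r y hy hx'x hxy
    set F := insert x' (insert x (Finset.univ.image y))
    have hFB : ↑F ⊆ B := by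
      simp only [F, Finset.coe_insert, Finset.coe_image, Finset.coe_univ, Set.image_univ,
        Set.insert_subset_iff, Set.range_subset_iff]
      exact ⟨hx', hx, hy⟩
    refine ⟨W x' x y, fun j k => hB F hFB (Or.inr ?_),
      Classical.epsilon_spec (h x' x r y hx'x hxy)⟩
    exact Set.mem_biUnion (by simp [F]) <| Set.mem_biUnion (by simp [F]) <|
      Set.mem_iUnion_of_mem r <| Set.mem_biUnion (fun j => by simp [F]) ⟨(j, k), rfl⟩

section Characterization

variable {S : Type*} [AddCommMonoid S] [PartialOrder S] {n : ℕ}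

theorem dimLE_of_forall_finset_exists_isSubCu
    (h : ∀ F : Finset S, ∃ T : AddSubmonoid S, IsSubCu T ∧ (↑F : Set S) ⊆ T ∧ DimLE T n) :
    DimLE S n := by
  classical
  intro x' x r y hx'x hxy
  obtain ⟨T, hT, hFT, hdim⟩ := h (insert x' (insert x (Finset.univ.image y)))
  simp only [Finset.coe_insert, Finset.coe_image, Finset.coe_univ, Set.image_univ,
    Set.insert_subset_iff, Set.range_subset_iff, SetLike.mem_coe] at hFT
  obtain ⟨hx'T, hxT, hyT⟩ := hFT
  let yT : Fin r → T := fun j => ⟨y j, hyT j⟩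
  have hxy' : WayBelow (⟨x, hxT⟩ : T) (∑ j, yT j) := by
    rwa [← hT.wayBelow_coe_iff, AddSubmonoid.coe_finsetSum]
  obtain ⟨z, hz⟩ := hdim ⟨x', hx'T⟩ ⟨x, hxT⟩ r yT (hT.wayBelow_coe_iff.1 hx'x) hxy'
  exact ⟨fun j k => z j k, hT.isDimWitness_coe_iff.2 hz⟩

theorem exists_isSubCu_countablyBased_dimLE [CuSemigroup S] (h : DimLE S n) {C : Set S}
    (hC : C.Countable) :
    ∃ T : AddSubmonoid S, IsSubCu T ∧ C ⊆ T ∧ CountablyBased T ∧ DimLE T n := by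
  obtain ⟨B, hBc, hCB, hBB, hB⟩ := exists_countable_addSubmonoid_dimLEOn h hC
  have hT := B.isSubCu_cuDerived hBB
  exact ⟨B.cuDerived, hT, hCB.trans hBB, hT.countablyBased hBc hBB subset_rfl,
    hT.dimLE hBB subset_rfl hB⟩

end Characterization

theorem dimLE_iff_subCu_characterization {S : Type*} [AddCommMonoid S] [PartialOrder S]
    [CuSemigroup S] (n : ℕ) :
    (DimLE S n ↔ ∀ F : Finset S, ∃ T : AddSubmonoid S, IsSubCu T ∧
      (↑F : Set S) ⊆ (T : Set S) ∧ DimLE ↥T n) ∧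
    (DimLE S n ↔ ∀ C : Set S, C.Countable → ∃ T : AddSubmonoid S, IsSubCu T ∧
      C ⊆ (T : Set S) ∧ CountablyBased ↥T ∧ DimLE ↥T n) := by
  have finset_of_countable : (∀ C : Set S, C.Countable → ∃ T : AddSubmonoid S, IsSubCu T ∧
      C ⊆ T ∧ CountablyBased T ∧ DimLE T n) →
      ∀ F : Finset S, ∃ T : AddSubmonoid S, IsSubCu T ∧ (↑F : Set S) ⊆ T ∧ DimLE T n :=
    fun h F => (h F F.countable_toSet).imp fun _ ⟨hT, hFT, _, hdim⟩ => ⟨hT, hFT, hdim⟩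
  exact ⟨⟨fun h => finset_of_countable fun _ => exists_isSubCu_countablyBased_dimLE h,
      dimLE_of_forall_finset_exists_isSubCu⟩,
    ⟨fun h _ => exists_isSubCu_countablyBased_dimLE h,
      fun h => dimLE_of_forall_finset_exists_isSubCu (finset_of_countable h)⟩⟩
end
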